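/- Let Λ₁ = ℕ₀ and Λ_m = q·Λ_{m-1} ∪ {n ∈ ℕ₀ : n ≥ q·b_m} for m ≥ 2, where (b_m) satisfies q·b_m ≤ b_{m+1} and b₁ = 0. Then for each k with 1 ≤ k ≤ m-1, Λ_m has exactly b_{k+1} − q·b_k maximal intervals of gaps of length q^{m−k} − 1, and consequently, for N = ⌊m − log_q(ℓ+1)⌋ ≥ 1, n_ℓ = Σ_{k=1}^{N} (b_{k+1} − q b_k) = b_{N+1} + (1−q) Σ_{k=1}^{N} b_k. -/

import Mathlib

/-- Number of maximal intervals of consecutive gaps of `Λ` of length at least `ℓ`,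
counted via their starting points. -/
noncomputable def nGapIntervals (Λ : Set ℕ) (ℓ : ℕ) : ℕ :=
  Nat.card {s : ℕ | (∀ k < ℓ, s + k ∉ Λ) ∧ (s = 0 ∨ s - 1 ∈ Λ)}

/-- Number of maximal intervals of consecutive gaps of `Λ` of length exactly `L`. -/
noncomputable def nGapIntervalsExact (Λ : Set ℕ) (L : ℕ) : ℕ :=
  Nat.card {s : ℕ | (∀ k < L, s + k ∉ Λ) ∧ s + L ∈ Λ ∧ (s = 0 ∨ s - 1 ∈ Λ)}

/-- The inductive semigroups `Λ₁ = ℕ₀`, `Λ_m = q·Λ_{m-1} ∪ {n : n ≥ q·b_m}`. -/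
def inductiveSG (q : ℕ) (b : ℕ → ℕ) : ℕ → Set ℕ
  | 0 => Set.univ
  | 1 => Set.univ
  | (m + 2) => (fun n => q * n) '' inductiveSG q b (m + 1) ∪
      {n : ℕ | q * b (m + 2) ≤ n}


/-!
By induction on `m`, using that `q·Λ_{m-1}` has no two consecutive elements below `q b_m`,
the maximal gap intervals of `Λ_m` are exactly the open intervals `(q^(m-k) t, q^(m-k) (t+1))`
with `1 ≤ k < m` and `q b_k ≤ t < b_{k+1}`. Such an interval has length `q^(m-k) - 1`, and
distinct pairs `(k, t)` give distinct intervals, so counting gap intervals of a given length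
amounts to counting these pairs. The closed form for `n_ℓ` is a telescoping of the sum, using
`b_1 = 0`.
-/

open Finset

theorem sum_Icc_sub_mul_eq {R : Type*} [CommRing R] (c : R) (f : ℕ → R) (hf : f 1 = 0)
    (N : ℕ) :
    ∑ k ∈ Icc 1 N, (f (k + 1) - c * f k) = f (N + 1) + (1 - c) * ∑ k ∈ Icc 1 N, f k := by
  induction N with
  | zero => simp [hf]
  | succ N ih =>
    rw [sum_Icc_succ_top (by omega), sum_Icc_succ_top (by omega), ih]
    ring

def IsGapRun (Λ : Set ℕ) (s L : ℕ) : Prop :=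
  (∀ r < L, s + r ∉ Λ) ∧ s + L ∈ Λ

namespace IsGapRun

variable {Λ : Set ℕ} {s L : ℕ}

theorem forall_notMem_iff (h : IsGapRun Λ s L) {ℓ : ℕ} :
    (∀ r < ℓ, s + r ∉ Λ) ↔ ℓ ≤ L := by
  refine ⟨fun hℓ => ?_, fun hℓ r hr => h.1 r (by omega)⟩
  by_contra! hL
  exact hℓ L hL h.2

theorem iff_eq (h : IsGapRun Λ s L) {L' : ℕ} : IsGapRun Λ s L' ↔ L' = L := by
  refine ⟨fun h' => le_antisymm (h.forall_notMem_iff.1 h'.1) (h'.forall_notMem_iff.1 h.1), ?_⟩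
  rintro rfl
  exact h

end IsGapRun

theorem nGapIntervalsExact_eq_natCard (Λ : Set ℕ) (L : ℕ) :
    nGapIntervalsExact Λ L = Nat.card {s | IsGapRun Λ s L ∧ (s = 0 ∨ s - 1 ∈ Λ)} := by
  simp only [nGapIntervalsExact, IsGapRun, and_assoc]

section inductiveSG

variable {q : ℕ} {b : ℕ → ℕ}

theorem mem_inductiveSG_succ {m : ℕ} (hm : 1 ≤ m) {n : ℕ} :
    n ∈ inductiveSG q b (m + 1) ↔
      (∃ y ∈ inductiveSG q b m, q * y = n) ∨ q * b (m + 1) ≤ n := by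
  obtain ⟨p, rfl⟩ := Nat.exists_eq_add_of_le' hm
  rfl

theorem mem_inductiveSG_of_le {m n : ℕ} (hm : 1 ≤ m) (hn : q * b m ≤ n) :
    n ∈ inductiveSG q b m := by
  obtain ⟨p, rfl⟩ := Nat.exists_eq_add_of_le' hm
  rcases p with _ | p
  · trivial
  · exact (mem_inductiveSG_succ (by omega)).2 (Or.inr hn)

theorem pow_mul_mem_inductiveSG {j t : ℕ} (hj : 1 ≤ j) (ht : q * b j ≤ t) (e : ℕ) :
    q ^ e * t ∈ inductiveSG q b (j + e) := by
  induction e with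
  | zero => simpa using mem_inductiveSG_of_le hj ht
  | succ e ih =>
    exact (mem_inductiveSG_succ (m := j + e) (by omega)).2 (Or.inl ⟨_, ih, by ring⟩)

theorem zero_mem_inductiveSG (hb1 : b 1 = 0) {m : ℕ} (hm : 1 ≤ m) :
    0 ∈ inductiveSG q b m := by
  simpa [Nat.add_sub_cancel' hm] using
    pow_mul_mem_inductiveSG (q := q) le_rfl (show q * b 1 ≤ 0 by simp [hb1]) (m - 1)

theorem mul_le_of_mem_inductiveSG_of_succ_mem (hq : 2 ≤ q) (hb1 : b 1 = 0) {m a : ℕ}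
    (hm : 1 ≤ m) (ha : a ∈ inductiveSG q b m) (ha' : a + 1 ∈ inductiveSG q b m) :
    q * b m ≤ a := by
  obtain ⟨p, rfl⟩ := Nat.exists_eq_add_of_le' hm
  rcases Nat.eq_zero_or_pos p with rfl | hp
  · simp [hb1]
  -- below `q * b m`, both `a` and `a + 1` lie in `q · Λ_{m-1} ∪ {q * b m}`, so `q` divides both
  by_contra! hlt
  have hqa : q ∣ a := by
    rcases (mem_inductiveSG_succ hp).1 ha with ⟨y, -, rfl⟩ | h
    · exact dvd_mul_right q y
    · omega
  have hqa' : q ∣ a + 1 := by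
    rcases (mem_inductiveSG_succ hp).1 ha' with ⟨y, -, hy⟩ | h
    · exact ⟨y, hy.symm⟩
    · exact ⟨b (p + 1), by omega⟩
  have := Nat.le_of_dvd one_pos ((Nat.dvd_add_right hqa).1 hqa')
  omega

theorem exists_eq_pow_mul_of_mem_inductiveSG_of_succ_notMem (hq : 2 ≤ q) (hb1 : b 1 = 0)
    {m : ℕ} (hm : 1 ≤ m) {a : ℕ} (ha : a ∈ inductiveSG q b m)
    (ha' : a + 1 ∉ inductiveSG q b m) :
    ∃ k t, 1 ≤ k ∧ k < m ∧ q * b k ≤ t ∧ t < b (k + 1) ∧ a = q ^ (m - k) * t := by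
  induction m, hm using Nat.le_induction generalizing a with
  | base => exact absurd (Set.mem_univ _) ha'
  | succ m hm ih =>
    have hlt : a + 1 < q * b (m + 1) := by
      by_contra! h
      exact ha' ((mem_inductiveSG_succ hm).2 (Or.inr h))
    obtain ⟨y, hy, rfl⟩ := ((mem_inductiveSG_succ hm).1 ha).resolve_right (by omega)
    by_cases hy' : y + 1 ∈ inductiveSG q b m
    · refine ⟨m, y, hm, by omega, mul_le_of_mem_inductiveSG_of_succ_mem hq hb1 hm hy hy', ?_,
        by simp⟩
      by_contra! h
      have := Nat.mul_le_mul_left q h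
      omega
    · obtain ⟨k, t, hk, hkm, ht, ht', rfl⟩ := ih hy hy'
      refine ⟨k, t, hk, by omega, ht, ht', ?_⟩
      rw [show m + 1 - k = m - k + 1 by omega, pow_succ']
      ring

variable (hb : ∀ m : ℕ, 1 ≤ m → q * b m ≤ b (m + 1))
include hb

theorem pow_mul_le_of_mul_le_succ {j : ℕ} (hj : 1 ≤ j) (d : ℕ) :
    q ^ d * b j ≤ b (j + d) := by
  induction d with
  | zero => simp
  | succ d ih =>
    calc q ^ (d + 1) * b j = q * (q ^ d * b j) := by ring
      _ ≤ q * b (j + d) := Nat.mul_le_mul_left q ih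
      _ ≤ b (j + (d + 1)) := hb _ (by omega)

theorem pow_mul_add_notMem_inductiveSG {j t : ℕ} (hj : 1 ≤ j) (ht : t < b (j + 1)) (e : ℕ)
    {r : ℕ} (hr0 : 0 < r) (hr : r < q ^ e) : q ^ e * t + r ∉ inductiveSG q b (j + e) := by
  induction e generalizing r with
  | zero => simp only [pow_zero] at hr; omega
  | succ e ih =>
    have hq : 0 < q := Nat.pos_of_ne_zero (by rintro rfl; simp at hr)
    rw [← add_assoc, mem_inductiveSG_succ (by omega)]
    rintro (⟨y, hy, hqy⟩ | hle)
    · obtain ⟨r', rfl⟩ : q ∣ r :=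
        (Nat.dvd_add_right (dvd_mul_of_dvd_left (dvd_pow_self q e.succ_ne_zero) t)).1
          ⟨y, hqy.symm⟩
      have hy' : y = q ^ e * t + r' :=
        Nat.eq_of_mul_eq_mul_left hq (by rw [hqy]; ring)
      refine ih (Nat.pos_of_mul_pos_left hr0) ?_ (hy' ▸ hy)
      exact Nat.lt_of_mul_lt_mul_left (by rwa [← pow_succ'])
    · refine lt_irrefl _ (calc
        q * b (j + e + 1) ≤ q ^ (e + 1) * t + r := hle
        _ < q ^ (e + 1) * (t + 1) := by rw [mul_add_one]; omega
        _ ≤ q ^ (e + 1) * b (j + 1) := Nat.mul_le_mul_left _ ht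
        _ = q * (q ^ e * b (j + 1)) := by ring
        _ ≤ q * b (j + 1 + e) := Nat.mul_le_mul_left _ (pow_mul_le_of_mul_le_succ hb (by omega) e)
        _ = q * b (j + e + 1) := by rw [Nat.add_right_comm])

end inductiveSG

/-- Indices `(k, t)` of the gap intervals `(q^(m-k) t, q^(m-k) (t+1))` of `inductiveSG q b m`. -/
def gapIndex (q : ℕ) (b : ℕ → ℕ) (m : ℕ) : Finset (Σ _ : ℕ, ℕ) :=
  (Ico 1 m).sigma fun k => Ico (q * b k) (b (k + 1))

def gapStart (q m : ℕ) (x : Σ _ : ℕ, ℕ) : ℕ := q ^ (m - x.1) * x.2 + 1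

section gapIndex

variable {q : ℕ} {b : ℕ → ℕ} {m : ℕ}

theorem mem_gapIndex {x : Σ _ : ℕ, ℕ} :
    x ∈ gapIndex q b m ↔
      (1 ≤ x.1 ∧ x.1 < m) ∧ q * b x.1 ≤ x.2 ∧ x.2 < b (x.1 + 1) := by
  simp only [gapIndex, mem_sigma, mem_Ico]

theorem gapStart_sub_one_mem {x : Σ _ : ℕ, ℕ} (hx : x ∈ gapIndex q b m) :
    gapStart q m x - 1 ∈ inductiveSG q b m := by
  obtain ⟨⟨hk, hkm⟩, ht, -⟩ := mem_gapIndex.1 hx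
  simpa [gapStart, Nat.add_sub_cancel' hkm.le] using pow_mul_mem_inductiveSG hk ht (m - x.1)

theorem exists_gapStart_eq (hq : 2 ≤ q) (hb1 : b 1 = 0) (hm : 1 ≤ m) {s : ℕ}
    (hs : s ∉ inductiveSG q b m) (hs' : s = 0 ∨ s - 1 ∈ inductiveSG q b m) :
    ∃ x ∈ gapIndex q b m, gapStart q m x = s := by
  have hs0 : s ≠ 0 := by
    rintro rfl
    exact hs (zero_mem_inductiveSG hb1 hm)
  obtain ⟨k, t, hk, hkm, ht, ht', hst⟩ :=
    exists_eq_pow_mul_of_mem_inductiveSG_of_succ_notMem hq hb1 hm (hs'.resolve_left hs0)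
      (by rwa [Nat.sub_add_cancel (Nat.one_le_iff_ne_zero.2 hs0)])
  refine ⟨⟨k, t⟩, mem_gapIndex.2 ⟨⟨hk, hkm⟩, ht, ht'⟩, ?_⟩
  simp only [gapStart]
  omega

variable (hb : ∀ m : ℕ, 1 ≤ m → q * b m ≤ b (m + 1))
include hb

theorem isGapRun_gapStart (hq : 0 < q) {x : Σ _ : ℕ, ℕ} (hx : x ∈ gapIndex q b m) :
    IsGapRun (inductiveSG q b m) (gapStart q m x) (q ^ (m - x.1) - 1) := by
  obtain ⟨⟨hk, hkm⟩, ht, ht'⟩ := mem_gapIndex.1 hx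
  have hm : x.1 + (m - x.1) = m := Nat.add_sub_cancel' hkm.le
  have hpos : 0 < q ^ (m - x.1) := Nat.pow_pos hq
  refine ⟨fun r hr => ?_, ?_⟩
  · have := pow_mul_add_notMem_inductiveSG hb hk ht' (m - x.1) (r := r + 1) (by omega) (by omega)
    rwa [hm, ← add_assoc, add_right_comm] at this
  · have := pow_mul_mem_inductiveSG (q := q) (b := b) hk (t := x.2 + 1) (by omega) (m - x.1)
    rw [hm, mul_add_one] at this
    convert this using 1
    simp only [gapStart]
    omega

theorem gapStart_injOn (hq : 2 ≤ q) : Set.InjOn (gapStart q m) (gapIndex q b m) := by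
  rintro ⟨k, t⟩ hx ⟨k', t'⟩ hy hxy
  have hrun := isGapRun_gapStart hb (by omega) hx
  rw [hxy] at hrun
  have hlen := (isGapRun_gapStart hb (by omega) hy).iff_eq.1 hrun
  obtain ⟨⟨-, hkm⟩, -⟩ := mem_gapIndex.1 hx
  obtain ⟨⟨-, hkm'⟩, -⟩ := mem_gapIndex.1 hy
  dsimp only at hkm hkm' hlen
  have hpow := Nat.one_le_pow (m - k) q (by omega)
  have hpow' := Nat.one_le_pow (m - k') q (by omega)
  have he : m - k = m - k' := (Nat.pow_right_inj (a := q) (by omega)).1 (by omega)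
  obtain rfl : k = k' := by omega
  obtain rfl : t = t' :=
    Nat.eq_of_mul_eq_mul_left (Nat.pow_pos (by omega : 0 < q)) (by simpa [gapStart] using hxy)
  rfl

theorem natCard_gapStarts_eq_sum (hq : 2 ≤ q) (hb1 : b 1 = 0) (hm : 1 ≤ m) (R : ℕ → Prop)
    (p : ℕ → Prop) [DecidablePred p] (hR : ∀ s, R s → s ∉ inductiveSG q b m)
    (hRp : ∀ x ∈ gapIndex q b m, R (gapStart q m x) ↔ p x.1) :
    Nat.card {s | R s ∧ (s = 0 ∨ s - 1 ∈ inductiveSG q b m)} =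
      ∑ k ∈ (Ico 1 m).filter p, (b (k + 1) - q * b k) := by
  have hset : {s | R s ∧ (s = 0 ∨ s - 1 ∈ inductiveSG q b m)} =
      gapStart q m '' ↑((gapIndex q b m).filter fun x => p x.1) := by
    ext s
    simp only [Set.mem_ofPred_eq, Set.mem_image, coe_filter]
    constructor
    · rintro ⟨hRs, hs⟩
      obtain ⟨x, hx, rfl⟩ := exists_gapStart_eq hq hb1 hm (hR s hRs) hs
      exact ⟨x, ⟨hx, (hRp x hx).1 hRs⟩, rfl⟩
    · rintro ⟨x, ⟨hx, hpx⟩, rfl⟩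
      exact ⟨(hRp x hx).2 hpx, Or.inr (gapStart_sub_one_mem hx)⟩
  rw [Nat.card_coe_set_eq, hset, ((gapStart_injOn hb hq).mono (filter_subset _ _)).ncard_image,
    Set.ncard_coe_finset, gapIndex, filter_sigma, card_sigma, sum_filter]
  refine sum_congr rfl fun k _ => ?_
  split_ifs with hk <;> simp [hk]

theorem nGapIntervalsExact_inductiveSG (hq : 2 ≤ q) (hb1 : b 1 = 0) {k : ℕ} (hk : 1 ≤ k)
    (hkm : k < m) :
    nGapIntervalsExact (inductiveSG q b m) (q ^ (m - k) - 1) = b (k + 1) - q * b k := by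
  have hqk : q ≤ q ^ (m - k) := Nat.le_self_pow (by omega) q
  rw [nGapIntervalsExact_eq_natCard, natCard_gapStarts_eq_sum hb hq hb1 (by omega) _ (· = k)
    (fun s hs => by simpa using hs.1 0 (by omega)) (fun x hx => ?_)]
  · rw [filter_eq', if_pos (mem_Ico.2 ⟨hk, hkm⟩), sum_singleton]
  · obtain ⟨⟨-, hxm⟩, -⟩ := mem_gapIndex.1 hx
    have := Nat.one_le_pow (m - x.1) q (by omega)
    rw [(isGapRun_gapStart hb (by omega) hx).iff_eq]
    constructor
    · intro h
      have := (Nat.pow_right_inj (by omega)).1 (show q ^ (m - k) = q ^ (m - x.1) by omega)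
      omega
    · rintro rfl
      rfl

theorem nGapIntervals_inductiveSG (hq : 2 ≤ q) (hb1 : b 1 = 0) {ℓ : ℕ} (hℓ : 1 ≤ ℓ)
    (hN : 1 ≤ m - Nat.clog q (ℓ + 1)) :
    nGapIntervals (inductiveSG q b m) ℓ =
      ∑ k ∈ Icc 1 (m - Nat.clog q (ℓ + 1)), (b (k + 1) - q * b k) := by
  have hc : 0 < Nat.clog q (ℓ + 1) := Nat.clog_pos (by omega) (by omega)
  rw [nGapIntervals, natCard_gapStarts_eq_sum hb hq hb1 (by omega) _
    (· ≤ m - Nat.clog q (ℓ + 1)) (fun s hs => by simpa using hs 0 hℓ) (fun x hx => ?_)]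
  · congr 1
    ext k
    simp only [mem_filter, mem_Ico, mem_Icc]
    omega
  · obtain ⟨⟨-, hxm⟩, -⟩ := mem_gapIndex.1 hx
    have := Nat.one_le_pow (m - x.1) q (by omega)
    rw [(isGapRun_gapStart hb (by omega) hx).forall_notMem_iff]
    calc ℓ ≤ q ^ (m - x.1) - 1 ↔ ℓ + 1 ≤ q ^ (m - x.1) := by omega
      _ ↔ Nat.clog q (ℓ + 1) ≤ m - x.1 := (Nat.clog_le_iff_le_pow (by omega)).symm
      _ ↔ x.1 ≤ m - Nat.clog q (ℓ + 1) := by omega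

end gapIndex

theorem inductive_semigroup_gap_intervals_general (q : ℕ) (hq : 2 ≤ q) (b : ℕ → ℕ)
    (hb1 : b 1 = 0) (hbmono : ∀ m : ℕ, 1 ≤ m → q * b m ≤ b (m + 1))
    (m : ℕ) :
    (∀ k : ℕ, 1 ≤ k → k ≤ m - 1 →
        nGapIntervalsExact (inductiveSG q b m) (q ^ (m - k) - 1) =
          b (k + 1) - q * b k) ∧
      ∀ ℓ N : ℕ, 1 ≤ ℓ → N = m - Nat.clog q (ℓ + 1) → 1 ≤ N →
        (nGapIntervals (inductiveSG q b m) ℓ : ℤ) =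
            ∑ k ∈ Finset.Icc 1 N, ((b (k + 1) : ℤ) - q * b k) ∧
          (nGapIntervals (inductiveSG q b m) ℓ : ℤ) =
            (b (N + 1) : ℤ) + (1 - (q : ℤ)) * ∑ k ∈ Finset.Icc 1 N, (b k : ℤ) := by
  refine ⟨fun k hk hkm => nGapIntervalsExact_inductiveSG hbmono hq hb1 hk (by omega), ?_⟩
  rintro ℓ N hℓ rfl hN
  have hsum : (nGapIntervals (inductiveSG q b m) ℓ : ℤ) =
      ∑ k ∈ Icc 1 (m - Nat.clog q (ℓ + 1)), ((b (k + 1) : ℤ) - q * b k) := by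
    rw [nGapIntervals_inductiveSG hbmono hq hb1 hℓ hN, Nat.cast_sum]
    refine sum_congr rfl fun k hk => ?_
    rw [Nat.cast_sub (hbmono k (mem_Icc.1 hk).1)]
    push_cast
    rfl
  exact ⟨hsum, hsum.trans (sum_Icc_sub_mul_eq _ (fun k => (b k : ℤ)) (by simp [hb1]) _)⟩

theorem inductive_semigroup_gap_intervals (q : ℕ) (hq : 2 ≤ q) (b : ℕ → ℕ)
    (hb1 : b 1 = 0) (hbmono : ∀ m : ℕ, 1 ≤ m → q * b m ≤ b (m + 1))
    (m : ℕ) (hm : 1 ≤ m) :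
    (∀ k : ℕ, 1 ≤ k → k ≤ m - 1 →
        nGapIntervalsExact (inductiveSG q b m) (q ^ (m - k) - 1) =
          b (k + 1) - q * b k) ∧
      ∀ ℓ N : ℕ, 1 ≤ ℓ → N = m - Nat.clog q (ℓ + 1) → 1 ≤ N →
        (nGapIntervals (inductiveSG q b m) ℓ : ℤ) =
            ∑ k ∈ Finset.Icc 1 N, ((b (k + 1) : ℤ) - q * b k) ∧
          (nGapIntervals (inductiveSG q b m) ℓ : ℤ) =
            (b (N + 1) : ℤ) + (1 - (q : ℤ)) * ∑ k ∈ Finset.Icc 1 N, (b k : ℤ) :=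
  inductive_semigroup_gap_intervals_general q hq b hb1 hbmono m
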